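/- In the fully IID hierarchical setting where each cluster's gradient ∇F_q(w) is the average of M i.i.d. device gradients with common mean ∇f(w) and covariance Cov(w), the heterogeneity measure satisfies E{∑_{q=1}^Q (D_q/N)‖∇F_q(w) - ∇F(w)‖₁} ≤ 2√(d · trace(Cov(w)))/√M. If trace(Cov(w)) is uniformly bounded over w, then ζ = sup_w E{ζ̃(M, w)} = O(M^{-1/2}). -/

import Mathlib

open MeasureTheory ProbabilityTheory Finset

lemma var_eq_int' {Ω : Type*} [MeasureSpace Ω] [IsProbabilityMeasure (ℙ : Measure Ω)]
    {X : Ω → ℝ} (hX : MemLp X 2) {c : ℝ} (hc : (∫ ω, X ω) = c) :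
    variance X ℙ = ∫ ω, (X ω - c) ^ 2 := by
  rw [variance_eq_integral hX.aestronglyMeasurable.aemeasurable, ← hc]

lemma abs_int_le {Ω : Type*} [MeasureSpace Ω] [IsProbabilityMeasure (ℙ : Measure Ω)]
    {X : Ω → ℝ} (hX : MemLp X 2) :
    (∫ ω, |X ω|) ≤ Real.sqrt (∫ ω, (X ω) ^ 2) := by
  have h2 := variance_nonneg (fun ω => |X ω|) ℙ
  rw [variance_eq_sub (by exact hX.abs)] at h2
  have hsq : (∫ ω, |X ω|) ^ 2 ≤ ∫ ω, (X ω) ^ 2 := by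
    simp only [Pi.pow_apply, sq_abs] at h2 ⊢
    linarith
  calc (∫ ω, |X ω|) = Real.sqrt ((∫ ω, |X ω|) ^ 2) :=
        (Real.sqrt_sq (integral_nonneg fun ω => abs_nonneg _)).symm
    _ ≤ Real.sqrt (∫ ω, (X ω) ^ 2) := Real.sqrt_le_sqrt hsq

lemma sum_sqrt_le {d : ℕ} (v : Fin d → ℝ) (hv : ∀ i, 0 ≤ v i) :
    ∑ i, Real.sqrt (v i) ≤ Real.sqrt (d * ∑ i, v i) := by
  have h1 : (∑ i, Real.sqrt (v i)) ^ 2 ≤ (d : ℝ) * ∑ i, v i := by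
    have := sq_sum_le_card_mul_sum_sq (s := (univ : Finset (Fin d)))
      (f := fun i => Real.sqrt (v i))
    simpa [Real.sq_sqrt (hv _), card_univ] using this
  calc ∑ i, Real.sqrt (v i)
      = Real.sqrt ((∑ i, Real.sqrt (v i)) ^ 2) :=
        (Real.sqrt_sq (sum_nonneg fun i _ => Real.sqrt_nonneg _)).symm
    _ ≤ Real.sqrt ((d : ℝ) * ∑ i, v i) := Real.sqrt_le_sqrt h1

lemma stmt16_main {Ω : Type*} [MeasureSpace Ω] [IsProbabilityMeasure (ℙ : Measure Ω)]
    {d Q M : ℕ} (hM : 1 ≤ M) (hQ : 1 ≤ Q)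
    (lam : Fin Q → ℝ) (hlam : ∀ q, 0 ≤ lam q) (hlam1 : ∑ q, lam q = 1)
    (gfd : Fin Q → Fin M → Ω → EuclideanSpace ℝ (Fin d))
    (gf : EuclideanSpace ℝ (Fin d)) (tr : ℝ)
    (hL2 : ∀ q k i, MemLp (fun ω => gfd q k ω i) 2)
    (hindep : iIndepFun
      (fun p : Fin Q × Fin M => gfd p.1 p.2))
    (hmean : ∀ q k i, (∫ ω, gfd q k ω i) = gf i)
    (htr : ∀ q k, (∫ ω, ∑ i, (gfd q k ω i - gf i) ^ 2) = tr)
    (hint : Integrable (fun ω =>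
      ∑ q, lam q * ∑ i, |(M : ℝ)⁻¹ * (∑ k, gfd q k ω i) -
        ∑ q', lam q' * ((M : ℝ)⁻¹ * ∑ k, gfd q' k ω i)|)) :
    (∫ ω, ∑ q, lam q * ∑ i, |(M : ℝ)⁻¹ * (∑ k, gfd q k ω i) -
        ∑ q', lam q' * ((M : ℝ)⁻¹ * ∑ k, gfd q' k ω i)|) ≤
      2 * Real.sqrt (d * tr) / Real.sqrt M := by
  have hMpos : (0 : ℝ) < M := by exact_mod_cast hM
  have hMne : (M : ℝ) ≠ 0 := ne_of_gt hMpos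
  set Y : Fin Q → Fin d → Ω → ℝ :=
    fun q i ω => (M : ℝ)⁻¹ * (∑ k, gfd q k ω i) - gf i with hY
  -- L2 membership
  have hSL2 : ∀ q i, MemLp (fun ω => ∑ k, gfd q k ω i) 2 (ℙ : Measure Ω) :=
    fun q i => memLp_finset_sum _ fun k _ => hL2 q k i
  have hYL2 : ∀ q i, MemLp (Y q i) 2 (ℙ : Measure Ω) := by
    intro q i
    have h1 : MemLp (fun ω => (M : ℝ)⁻¹ * ∑ k, gfd q k ω i) 2 (ℙ : Measure Ω) :=
      (hSL2 q i).const_mul _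
    exact h1.sub (memLp_const (gf i))
  -- per-device variance
  have hvarW : ∀ q k i, variance (fun ω => gfd q k ω i) ℙ = ∫ ω, (gfd q k ω i - gf i) ^ 2 :=
    fun q k i => var_eq_int' (hL2 q k i) (hmean q k i)
  have htrq : ∀ q k, (∑ i, variance (fun ω => gfd q k ω i) ℙ) = tr := by
    intro q k
    calc ∑ i, variance (fun ω => gfd q k ω i) ℙ
        = ∑ i, ∫ ω, (gfd q k ω i - gf i) ^ 2 := by simp [hvarW]
      _ = ∫ ω, ∑ i, (gfd q k ω i - gf i) ^ 2 := by
          refine (integral_finset_sum _ fun i _ => ?_).symm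
          exact ((hL2 q k i).sub (memLp_const (gf i))).integrable_sq
      _ = tr := htr q k
  -- pairwise independence of coordinates within a cluster
  have hpair : ∀ q i, Set.Pairwise ↑(univ : Finset (Fin M))
      (fun k j => IndepFun (fun ω => gfd q k ω i) (fun ω => gfd q j ω i) ℙ) := by
    intro q i k _ j _ hkj
    have h1 : IndepFun (gfd q k) (gfd q j) ℙ :=
      hindep.indepFun (by simp [Prod.ext_iff, hkj] :
        ((q, k) : Fin Q × Fin M) ≠ (q, j))
    exact h1.comp ((measurable_pi_apply i).comp (WithLp.measurable_ofLp 2 _))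
      ((measurable_pi_apply i).comp (WithLp.measurable_ofLp 2 _))
  -- sum of i.i.d. variances
  have hvarS : ∀ q i, variance (fun ω => ∑ k, gfd q k ω i) ℙ
      = ∑ k, variance (fun ω => gfd q k ω i) ℙ := by
    intro q i
    have := IndepFun.variance_sum (μ := (ℙ : Measure Ω))
      (X := fun k (ω : Ω) => gfd q k ω i) (s := univ)
      (fun k _ => hL2 q k i) (hpair q i)
    rw [show (fun ω => ∑ k, gfd q k ω i) = ∑ k, (fun ω => gfd q k ω i) from by
      funext ω; simp]
    exact this
  -- mean of cluster average
  have hmeanbar : ∀ q i, (∫ ω, (M : ℝ)⁻¹ * ∑ k, gfd q k ω i) = gf i := by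
    intro q i
    rw [integral_const_mul, integral_finset_sum _ fun k _ => (hL2 q k i).integrable one_le_two]
    simp only [hmean]
    rw [Finset.sum_const, card_univ, Fintype.card_fin, nsmul_eq_mul, ← mul_assoc,
      inv_mul_cancel₀ hMne, one_mul]
  -- second moment of Y
  have hvarY : ∀ q i, (∫ ω, (Y q i ω) ^ 2)
      = (M : ℝ)⁻¹ ^ 2 * ∑ k, variance (fun ω => gfd q k ω i) ℙ := by
    intro q i
    have h1 : variance (fun ω => (M : ℝ)⁻¹ * ∑ k, gfd q k ω i) ℙ = ∫ ω, (Y q i ω) ^ 2 :=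
      var_eq_int' ((hSL2 q i).const_mul _) (hmeanbar q i)
    rw [← h1, variance_const_mul, hvarS]
  have hsum : ∀ q, (∑ i, ∫ ω, (Y q i ω) ^ 2) = tr / M := by
    intro q
    calc ∑ i, ∫ ω, (Y q i ω) ^ 2
        = ∑ i : Fin d, (M : ℝ)⁻¹ ^ 2 * ∑ k, variance (fun ω => gfd q k ω i) ℙ := by
          simp [hvarY]
      _ = (M : ℝ)⁻¹ ^ 2 * ∑ k : Fin M, ∑ i, variance (fun ω => gfd q k ω i) ℙ := by
          rw [← Finset.mul_sum, Finset.sum_comm]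
      _ = (M : ℝ)⁻¹ ^ 2 * ∑ k : Fin M, tr := by simp [htrq]
      _ = tr / M := by
          rw [Finset.sum_const, card_univ, Fintype.card_fin, nsmul_eq_mul]
          field_simp
  -- integrability facts
  have hintY : ∀ q i, Integrable (fun ω => |Y q i ω|) :=
    fun q i => ((hYL2 q i).integrable one_le_two).abs
  have hintRow : ∀ q, Integrable (fun ω => ∑ i, |Y q i ω|) :=
    fun q => integrable_finset_sum _ fun i _ => hintY q i
  have hintR : Integrable (fun ω => 2 * ∑ q, lam q * ∑ i, |Y q i ω|) :=
    ((integrable_finset_sum _ fun q _ => (hintRow q).const_mul (lam q))).const_mul 2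
  -- trace nonneg
  have htrnn : (0 : ℝ) ≤ tr := by
    rw [← htr ⟨0, hQ⟩ ⟨0, hM⟩]
    exact integral_nonneg fun ω => sum_nonneg fun i _ => sq_nonneg _
  -- row bound
  have hrow : ∀ q, (∑ i, ∫ ω, |Y q i ω|) ≤ Real.sqrt (d * (tr / M)) := by
    intro q
    calc ∑ i, ∫ ω, |Y q i ω|
        ≤ ∑ i, Real.sqrt (∫ ω, (Y q i ω) ^ 2) :=
          sum_le_sum fun i _ => abs_int_le (hYL2 q i)
      _ ≤ Real.sqrt (d * ∑ i, ∫ ω, (Y q i ω) ^ 2) :=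
          sum_sqrt_le _ fun i => integral_nonneg fun ω => sq_nonneg _
      _ = Real.sqrt (d * (tr / M)) := by rw [hsum]
  -- pointwise bound
  have hpt : ∀ ω, (∑ q, lam q * ∑ i, |(M : ℝ)⁻¹ * (∑ k, gfd q k ω i) -
      ∑ q', lam q' * ((M : ℝ)⁻¹ * ∑ k, gfd q' k ω i)|)
      ≤ 2 * ∑ q, lam q * ∑ i, |Y q i ω| := by
    intro ω
    have key : ∀ q i, |(M : ℝ)⁻¹ * (∑ k, gfd q k ω i) -
        ∑ q', lam q' * ((M : ℝ)⁻¹ * ∑ k, gfd q' k ω i)|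
        ≤ |Y q i ω| + ∑ q', lam q' * |Y q' i ω| := by
      intro q i
      have e : (M : ℝ)⁻¹ * (∑ k, gfd q k ω i) -
          ∑ q', lam q' * ((M : ℝ)⁻¹ * ∑ k, gfd q' k ω i)
          = Y q i ω - ∑ q', lam q' * Y q' i ω := by
        simp only [hY, mul_sub, Finset.sum_sub_distrib, ← Finset.sum_mul, hlam1]
        ring
      rw [e]
      calc |Y q i ω - ∑ q', lam q' * Y q' i ω|
          ≤ |Y q i ω| + |∑ q', lam q' * Y q' i ω| := abs_sub _ _
        _ ≤ |Y q i ω| + ∑ q', lam q' * |Y q' i ω| := by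
            refine add_le_add_right ((Finset.abs_sum_le_sum_abs _ _).trans ?_) _
            refine sum_le_sum fun q' _ => ?_
            rw [abs_mul, abs_of_nonneg (hlam q')]
    calc ∑ q, lam q * ∑ i, |(M : ℝ)⁻¹ * (∑ k, gfd q k ω i) -
          ∑ q', lam q' * ((M : ℝ)⁻¹ * ∑ k, gfd q' k ω i)|
        ≤ ∑ q, lam q * ∑ i, (|Y q i ω| + ∑ q', lam q' * |Y q' i ω|) :=
          sum_le_sum fun q _ => mul_le_mul_of_nonneg_left
            (sum_le_sum fun i _ => key q i) (hlam q)
      _ = 2 * ∑ q, lam q * ∑ i, |Y q i ω| := by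
          simp only [Finset.sum_add_distrib, mul_add, Finset.sum_add_distrib]
          rw [← Finset.sum_mul, hlam1, one_mul, Finset.sum_comm]
          simp only [← Finset.mul_sum]
          ring
  -- conclusion
  calc (∫ ω, ∑ q, lam q * ∑ i, |(M : ℝ)⁻¹ * (∑ k, gfd q k ω i) -
        ∑ q', lam q' * ((M : ℝ)⁻¹ * ∑ k, gfd q' k ω i)|)
      ≤ ∫ ω, 2 * ∑ q, lam q * ∑ i, |Y q i ω| :=
        integral_mono hint hintR hpt
    _ = 2 * ∑ q, lam q * ∑ i, ∫ ω, |Y q i ω| := by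
        rw [integral_const_mul,
          integral_finset_sum _ fun q _ => (hintRow q).const_mul (lam q)]
        congr 1
        refine Finset.sum_congr rfl fun q _ => ?_
        rw [integral_const_mul, integral_finset_sum _ fun i _ => hintY q i]
    _ ≤ 2 * ∑ q, lam q * Real.sqrt (d * (tr / M)) := by
        gcongr with q hq
        · exact hlam q
        · exact hrow q
    _ = 2 * Real.sqrt (d * (tr / M)) := by
        rw [← Finset.sum_mul, hlam1, one_mul]
    _ = 2 * Real.sqrt (d * tr) / Real.sqrt M := by
        rw [show (d : ℝ) * (tr / M) = d * tr / M by ring,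
          Real.sqrt_div (by positivity), mul_div_assoc]


/-- In the fully IID hierarchical setting, where each cluster gradient
∇F_q(w) is the average of M i.i.d. device gradients with common mean ∇f(w) and covariance
Cov(w) (with trace tr(w)), the heterogeneity measure satisfies
E{∑_q (D_q/N)‖∇F_q(w) - ∇F(w)‖₁} ≤ 2√(d·tr(w))/√M for every w; consequently, if tr is
uniformly bounded by C, then ζ = sup_w E{ζ̃(M,w)} ≤ 2√(d·C)/√M = O(M^{-1/2}).
Here `gfd w q k` is the gradient of device k in cluster q at the point indexed by `w`. -/
theorem stmt16 {Ω : Type*} [MeasureSpace Ω] [IsProbabilityMeasure (ℙ : Measure Ω)]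
    {d Q M : ℕ} (hM : 1 ≤ M) (hQ : 1 ≤ Q) {W : Type*} [Nonempty W]
    (lam : Fin Q → ℝ) (hlam : ∀ q, 0 ≤ lam q) (hlam1 : ∑ q, lam q = 1)
    (gfd : W → Fin Q → Fin M → Ω → EuclideanSpace ℝ (Fin d))
    (gf : W → EuclideanSpace ℝ (Fin d)) (tr : W → ℝ)
    (hmeas : ∀ w q k, Measurable (gfd w q k))
    (hL2 : ∀ w q k i, MemLp (fun ω => gfd w q k ω i) 2)
    (hindep : ∀ w, iIndepFun
      (fun p : Fin Q × Fin M => gfd w p.1 p.2))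
    (hident : ∀ w q k q' k', IdentDistrib (gfd w q k) (gfd w q' k'))
    (hmean : ∀ w q k i, (∫ ω, gfd w q k ω i) = gf w i)
    (htr : ∀ w q k, (∫ ω, ∑ i, (gfd w q k ω i - gf w i) ^ 2) = tr w)
    (hint : ∀ w, Integrable (fun ω =>
      ∑ q, lam q * ∑ i, |(M : ℝ)⁻¹ * (∑ k, gfd w q k ω i) -
        ∑ q', lam q' * ((M : ℝ)⁻¹ * ∑ k, gfd w q' k ω i)|)) :
    (∀ w : W,
      (∫ ω, ∑ q, lam q * ∑ i, |(M : ℝ)⁻¹ * (∑ k, gfd w q k ω i) -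
          ∑ q', lam q' * ((M : ℝ)⁻¹ * ∑ k, gfd w q' k ω i)|) ≤
        2 * Real.sqrt (d * tr w) / Real.sqrt M) ∧
    (∀ C : ℝ, (∀ w, tr w ≤ C) →
      (⨆ w : W, ∫ ω, ∑ q, lam q * ∑ i, |(M : ℝ)⁻¹ * (∑ k, gfd w q k ω i) -
          ∑ q', lam q' * ((M : ℝ)⁻¹ * ∑ k, gfd w q' k ω i)|) ≤
        2 * Real.sqrt (d * C) / Real.sqrt M) := by
  have hmain : ∀ w : W,
      (∫ ω, ∑ q, lam q * ∑ i, |(M : ℝ)⁻¹ * (∑ k, gfd w q k ω i) -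
          ∑ q', lam q' * ((M : ℝ)⁻¹ * ∑ k, gfd w q' k ω i)|) ≤
        2 * Real.sqrt (d * tr w) / Real.sqrt M := fun w =>
    stmt16_main hM hQ lam hlam hlam1 (gfd w) (gf w) (tr w)
      (hL2 w) (hindep w) (hmean w) (htr w) (hint w)
  refine ⟨hmain, fun C hC => ?_⟩
  refine ciSup_le fun w => (hmain w).trans ?_
  have hMs : (0 : ℝ) < Real.sqrt M := Real.sqrt_pos.2 (by exact_mod_cast hM)
  rw [div_le_div_iff_of_pos_right hMs]
  have h1 : (d : ℝ) * tr w ≤ d * C :=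
    mul_le_mul_of_nonneg_left (hC w) (Nat.cast_nonneg d)
  have h2 := Real.sqrt_le_sqrt h1
  linarith
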